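/- Let S be a nonempty set and let A, B : S → ℝ be functions with A(x) ≥ 0 and B(x) > 0 for all x ∈ S; define g(x) = A(x)/B(x). Given x_k ∈ S, set y_k = √(A(x_k))/B(x_k), and suppose x_{k+1} ∈ S satisfies 2·y_k·√(A(x_{k+1})) − y_k²·B(x_{k+1}) ≥ 2·y_k·√(A(x)) − y_k²·B(x) for all x ∈ S. Then g(x_{k+1}) ≥ g(x_k); hence along the iterates of this alternating scheme the sequence (g(x_k)) is nondecreasing, and if g is bounded above on S it converges. -/

import Mathlib

/-!
For `a ≥ 0` and `b > 0`, completing the square gives `2 y √a - y² b ≤ a / b` for every `y`,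
with equality at `y = √a / b`. So the surrogate maximized in the primal step minorizes the
ratio `g = A / B` and touches it at the current iterate, whence
`g x_k = surrogate(x_k) ≤ surrogate(x_{k+1}) ≤ g x_{k+1}`.
-/

noncomputable def quadraticTransform (y a b : ℝ) : ℝ :=
  2 * y * Real.sqrt a - y ^ 2 * b

theorem quadraticTransform_le_div (y : ℝ) {a b : ℝ} (ha : 0 ≤ a) (hb : 0 < b) :
    quadraticTransform y a b ≤ a / b := by
  rw [quadraticTransform, le_div_iff₀ hb]
  nlinarith [sq_nonneg (Real.sqrt a - y * b), Real.sq_sqrt ha]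

theorem quadraticTransform_sqrt_div {a : ℝ} (ha : 0 ≤ a) (b : ℝ) :
    quadraticTransform (Real.sqrt a / b) a b = a / b := by
  rcases eq_or_ne b 0 with rfl | hb
  · simp [quadraticTransform]
  · rw [quadraticTransform]
    field_simp
    linear_combination Real.mul_self_sqrt ha

theorem div_le_div_of_quadraticTransform_le {a b a' b' : ℝ} (ha : 0 ≤ a) (ha' : 0 ≤ a')
    (hb' : 0 < b')
    (h : quadraticTransform (Real.sqrt a / b) a b ≤ quadraticTransform (Real.sqrt a / b) a' b') :
    a / b ≤ a' / b' :=
  calc a / b = quadraticTransform (Real.sqrt a / b) a b := (quadraticTransform_sqrt_div ha b).symm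
    _ ≤ quadraticTransform (Real.sqrt a / b) a' b' := h
    _ ≤ a' / b' := quadraticTransform_le_div _ ha' hb'

theorem ao_fp_monotone_convergence_general {α : Type*} (S : Set α)
    (A B : α → ℝ) (hA : ∀ x ∈ S, 0 ≤ A x) (hB : ∀ x ∈ S, 0 < B x)
    (g : α → ℝ) (hg : ∀ x, g x = A x / B x) :
    (∀ xk ∈ S, ∀ xk1 ∈ S,
      (∀ x ∈ S,
        2 * (Real.sqrt (A xk) / B xk) * Real.sqrt (A x) -
            (Real.sqrt (A xk) / B xk) ^ 2 * B x ≤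
          2 * (Real.sqrt (A xk) / B xk) * Real.sqrt (A xk1) -
            (Real.sqrt (A xk) / B xk) ^ 2 * B xk1) →
      g xk ≤ g xk1) ∧
    (∀ x : ℕ → α, (∀ k, x k ∈ S) →
      (∀ k, ∀ z ∈ S,
        2 * (Real.sqrt (A (x k)) / B (x k)) * Real.sqrt (A z) -
            (Real.sqrt (A (x k)) / B (x k)) ^ 2 * B z ≤
          2 * (Real.sqrt (A (x k)) / B (x k)) * Real.sqrt (A (x (k + 1))) -
            (Real.sqrt (A (x k)) / B (x k)) ^ 2 * B (x (k + 1))) →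
      Monotone (fun k => g (x k)) ∧
      ((∃ C : ℝ, ∀ z ∈ S, g z ≤ C) →
        ∃ L : ℝ, Filter.Tendsto (fun k => g (x k)) Filter.atTop (nhds L))) := by
  have step : ∀ xk ∈ S, ∀ xk1 ∈ S,
      quadraticTransform (Real.sqrt (A xk) / B xk) (A xk) (B xk) ≤
        quadraticTransform (Real.sqrt (A xk) / B xk) (A xk1) (B xk1) → g xk ≤ g xk1 :=
    fun xk hxk xk1 hxk1 h => by
      simpa only [hg] using
        div_le_div_of_quadraticTransform_le (hA xk hxk) (hA xk1 hxk1) (hB xk1 hxk1) h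
  refine ⟨fun xk hxk xk1 hxk1 hmax => step xk hxk xk1 hxk1 (hmax xk hxk), ?_⟩
  intro x hx hmax
  have mono : Monotone (fun k => g (x k)) :=
    monotone_nat_of_le_succ fun k => step _ (hx k) _ (hx (k + 1)) (hmax k _ (hx k))
  refine ⟨mono, fun ⟨C, hC⟩ => ⟨_, tendsto_atTop_ciSup mono ⟨C, ?_⟩⟩⟩
  rintro _ ⟨k, rfl⟩
  exact hC (x k) (hx k)

/-- Monotone convergence of the alternating fractional-programming scheme: with
`g = A/B`, `A ≥ 0` and `B > 0` on `S`, if from `x_k ∈ S` one sets `y_k = √(A x_k)/B x_k`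
and picks `x_{k+1} ∈ S` maximizing the surrogate `x ↦ 2 y_k √(A x) − y_k² B x` over `S`,
then `g x_{k+1} ≥ g x_k`; hence along the iterates the sequence `g (x k)` is
nondecreasing, and it converges whenever `g` is bounded above on `S`. -/
theorem ao_fp_monotone_convergence {α : Type*} (S : Set α) (hS : S.Nonempty)
    (A B : α → ℝ) (hA : ∀ x ∈ S, 0 ≤ A x) (hB : ∀ x ∈ S, 0 < B x)
    (g : α → ℝ) (hg : ∀ x, g x = A x / B x) :
    (∀ xk ∈ S, ∀ xk1 ∈ S,
      (∀ x ∈ S,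
        2 * (Real.sqrt (A xk) / B xk) * Real.sqrt (A x) -
            (Real.sqrt (A xk) / B xk) ^ 2 * B x ≤
          2 * (Real.sqrt (A xk) / B xk) * Real.sqrt (A xk1) -
            (Real.sqrt (A xk) / B xk) ^ 2 * B xk1) →
      g xk ≤ g xk1) ∧
    (∀ x : ℕ → α, (∀ k, x k ∈ S) →
      (∀ k, ∀ z ∈ S,
        2 * (Real.sqrt (A (x k)) / B (x k)) * Real.sqrt (A z) -
            (Real.sqrt (A (x k)) / B (x k)) ^ 2 * B z ≤
          2 * (Real.sqrt (A (x k)) / B (x k)) * Real.sqrt (A (x (k + 1))) -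
            (Real.sqrt (A (x k)) / B (x k)) ^ 2 * B (x (k + 1))) →
      Monotone (fun k => g (x k)) ∧
      ((∃ C : ℝ, ∀ z ∈ S, g z ≤ C) →
        ∃ L : ℝ, Filter.Tendsto (fun k => g (x k)) Filter.atTop (nhds L))) :=
  ao_fp_monotone_convergence_general S A B hA hB g hg
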